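/- arXiv:1606.00859 — 4 statements merged into one kernel-verified Lean document; each statement's English description precedes it below -/
import Mathlib

section
/- Let H be a real Hilbert space and A : H →L[ℝ] H a bounded self-adjoint operator that is positive semidefinite, i.e. ⟪x, A x⟫ ≥ 0 for all x ∈ H. If Q : ℝ → H is a solution of the linearized evolution equation Q''(t) = −A (Q(t)) with Q'(0) = 0, then ‖Q(t)‖ ≤ ‖Q(0)‖ for all t ∈ ℝ. -/
/-!
With `S t = ∫₀ᵗ Q`, integrating the equation once and using `Q'(0) = 0` gives `Q' = -A S`, so `(S, Q)`
solves the first-order system `S' = Q`, `Q' = -A S`. Its energy `‖Q‖² + ⟪S, A S⟫` is conserved, and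
since `S 0 = 0` and `⟪S t, A (S t)⟫ ≥ 0` this yields `‖Q t‖² ≤ ‖Q 0‖²`.
-/

open scoped RealInnerProductSpace

theorem deriv_eq_deriv_zero_sub_apply_integral {E : Type*} [NormedAddCommGroup E] [NormedSpace ℝ E]
    [CompleteSpace E] (A : E →L[ℝ] E) {Q : ℝ → E} (hQ : Continuous Q)
    (hQ' : Differentiable ℝ (deriv Q)) (hEq : ∀ t, deriv (deriv Q) t = -A (Q t)) (t : ℝ) :
    deriv Q t = deriv Q 0 - A (∫ s in (0 : ℝ)..t, Q s) := by
  have hftc : ∫ s in (0 : ℝ)..t, deriv (deriv Q) s = deriv Q t - deriv Q 0 :=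
    intervalIntegral.integral_eq_sub_of_hasDerivAt (fun s _ => (hQ' s).hasDerivAt)
      (by rw [funext hEq]; exact (A.continuous.comp hQ).neg.intervalIntegrable 0 t)
  simp only [hEq, intervalIntegral.integral_neg,
    A.intervalIntegral_comp_comm (hQ.intervalIntegrable 0 t)] at hftc
  rw [sub_eq_add_neg, hftc]
  abel

theorem norm_sq_add_inner_apply_eq_of_hasDerivAt {E : Type*} [NormedAddCommGroup E]
    [InnerProductSpace ℝ E] {A : E →L[ℝ] E} (hA : (A : E →ₗ[ℝ] E).IsSymmetric) {Q S : ℝ → E}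
    (hS : ∀ t, HasDerivAt S (Q t) t) (hQ : ∀ t, HasDerivAt Q (-A (S t)) t) (t : ℝ) :
    ‖Q t‖ ^ 2 + ⟪S t, A (S t)⟫ = ‖Q 0‖ ^ 2 + ⟪S 0, A (S 0)⟫ := by
  have hE : ∀ t, HasDerivAt (fun t => ‖Q t‖ ^ 2 + ⟪S t, A (S t)⟫) 0 t := by
    intro t
    refine ((hQ t).norm_sq.add
      ((hS t).inner ℝ (A.hasFDerivAt.comp_hasDerivAt t (hS t)))).congr_deriv ?_
    have hsymm : ⟪S t, A (Q t)⟫ = ⟪Q t, A (S t)⟫ := by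
      rw [← ContinuousLinearMap.coe_coe A, ← hA, real_inner_comm]
    rw [inner_neg_right, hsymm, Function.comp_apply]
    ring
  exact is_const_of_deriv_eq_zero (fun t => (hE t).differentiableAt) (fun t => (hE t).deriv) t 0

/-- If the bounded self-adjoint operator `A` is positive semidefinite, then any
solution of `Q'' = -A Q` with vanishing initial velocity satisfies
`‖Q(t)‖ ≤ ‖Q(0)‖` for all `t` (mode stability). -/
theorem stmt_2 {H : Type*} [NormedAddCommGroup H] [InnerProductSpace ℝ H]
    [CompleteSpace H] (A : H →L[ℝ] H)
    (hA : ∀ x y : H, ⟪A x, y⟫ = ⟪x, A y⟫)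
    (hpos : ∀ x : H, 0 ≤ ⟪x, A x⟫) (Q : ℝ → H)
    (hQ : Differentiable ℝ Q) (hQ' : Differentiable ℝ (deriv Q))
    (hEq : ∀ t : ℝ, deriv (deriv Q) t = -A (Q t))
    (h0 : deriv Q 0 = 0) :
    ∀ t : ℝ, ‖Q t‖ ≤ ‖Q 0‖ := by
  intro t
  set S : ℝ → H := fun t => ∫ s in (0 : ℝ)..t, Q s
  have hS : ∀ t, HasDerivAt S (Q t) t := fun t =>
    (hQ.continuous.integral_hasStrictDerivAt 0 t).hasDerivAt
  have hvel : ∀ t, HasDerivAt Q (-A (S t)) t := fun t => by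
    simpa only [deriv_eq_deriv_zero_sub_apply_integral A hQ.continuous hQ' hEq t, h0, zero_sub]
      using (hQ t).hasDerivAt
  have henergy := norm_sq_add_inner_apply_eq_of_hasDerivAt hA hS hvel t
  have hS0 : S 0 = 0 := intervalIntegral.integral_same
  rw [hS0, map_zero, inner_zero_left, add_zero] at henergy
  exact (pow_le_pow_iff_left₀ (norm_nonneg _) (norm_nonneg _) two_ne_zero).mp
    (by linarith [hpos (S t)])
end

section
/- Let H be a real Hilbert space, A : H →L[ℝ] H a bounded self-adjoint operator, Q₀ ∈ H with ⟪Q₀, A Q₀⟫ < 0, and let Q : ℝ → H be a solution of the linearized evolution equation Q''(t) = −A (Q(t)) with Q(0) = Q₀ and Q'(0) = 0. Then Q grows exponentially: there exist constants C > 0 and α > 0 such that ‖Q(t)‖ ≥ C · exp(α t) for all t ≥ 0. -/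
open scoped RealInnerProductSpace

/-!
The energy `‖Q'‖² + ⟪Q, A Q⟫` is conserved, so it stays equal to `⟪Q₀, A Q₀⟫ < 0`. Hence
`I = ‖Q‖²` satisfies `I'' = 2 (‖Q'‖² - ⟪Q, A Q⟫) > 0` and, by Cauchy–Schwarz, `I'² < I'' I`:
`log I` is strictly convex on `[0, ∞)`. As `(log I)'(0) = 0`, the slope `(log I)'(1)` is positive,
and `log I` lies above its tangent line at `1`, which is the exponential lower bound.
-/

open Set Real

theorem ConvexOn.add_mul_sub_le_of_hasDerivAt {D : Set ℝ} {f : ℝ → ℝ} {f' x y : ℝ}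
    (hf : ConvexOn ℝ D f) (hx : x ∈ D) (hy : y ∈ D) (hf' : HasDerivAt f f' x) :
    f x + f' * (y - x) ≤ f y := by
  rcases lt_trichotomy x y with hxy | rfl | hyx
  · have h := hf.le_slope_of_hasDerivAt hx hy hxy hf'
    rw [slope_def_field, le_div_iff₀ (sub_pos.2 hxy)] at h
    linarith
  · simp
  · have h := hf.slope_le_of_hasDerivAt hy hx hyx hf'
    rw [slope_def_field, div_le_iff₀ (sub_pos.2 hyx)] at h
    linarith

section SecondOrder

variable {I I' I'' : ℝ → ℝ}

theorem le_of_deriv_nonneg_of_deriv2_nonneg (hI : ∀ t, HasDerivAt I (I' t) t)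
    (hI' : ∀ t, HasDerivAt I' (I'' t) t) (hI'' : ∀ t, 0 ≤ I'' t) {s t : ℝ} (hs : 0 ≤ I' s)
    (hst : s ≤ t) : I s ≤ I t := by
  have hconv : ConvexOn ℝ univ I :=
    convexOn_of_hasDerivWithinAt2_nonneg convex_univ
      (fun x _ => (hI x).continuousAt.continuousWithinAt) (fun x _ => (hI x).hasDerivWithinAt)
      (fun x _ => (hI' x).hasDerivWithinAt) (fun x _ => hI'' x)
  nlinarith [hconv.add_mul_sub_le_of_hasDerivAt (mem_univ s) (mem_univ t) (hI s)]

theorem exists_mul_exp_le_of_sq_deriv_lt (hI : ∀ t, HasDerivAt I (I' t) t)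
    (hI' : ∀ t, HasDerivAt I' (I'' t) t) (hpos : ∀ t, 0 ≤ t → 0 < I t) (hI'0 : 0 ≤ I' 0)
    (hlog : ∀ t, 0 ≤ t → I' t ^ 2 < I'' t * I t) :
    ∃ C > 0, ∃ α > 0, ∀ t, 0 ≤ t → C * exp (α * t) ≤ I t := by
  set v : ℝ → ℝ := fun t => I' t / I t
  have hlogI : ∀ t, 0 ≤ t → HasDerivAt (fun t => log (I t)) (v t) t :=
    fun t ht => (hI t).log (hpos t ht).ne'
  have hv : ∀ t, 0 ≤ t → HasDerivAt v ((I'' t * I t - I' t * I' t) / I t ^ 2) t :=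
    fun t ht => (hI' t).div (hI t) (hpos t ht).ne'
  have hv_pos : ∀ t, 0 ≤ t → 0 < (I'' t * I t - I' t * I' t) / I t ^ 2 := fun t ht =>
    div_pos (by nlinarith [hlog t ht]) (pow_pos (hpos t ht) 2)
  have hconv : ConvexOn ℝ (Ici 0) (fun t => log (I t)) :=
    convexOn_of_hasDerivWithinAt2_nonneg (convex_Ici 0)
      (fun x hx => (hlogI x hx).continuousAt.continuousWithinAt)
      (fun x hx => (hlogI x (interior_subset hx)).hasDerivWithinAt)
      (fun x hx => (hv x (interior_subset hx)).hasDerivWithinAt)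
      (fun x hx => (hv_pos x (interior_subset hx)).le)
  have hv_mono : StrictMonoOn v (Ici 0) :=
    strictMonoOn_of_hasDerivWithinAt_pos (convex_Ici 0)
      (fun x hx => (hv x hx).continuousAt.continuousWithinAt)
      (fun x hx => (hv x (interior_subset hx)).hasDerivWithinAt)
      (fun x hx => hv_pos x (interior_subset hx))
  have hv1 : 0 < v 1 :=
    (div_nonneg hI'0 (hpos 0 le_rfl).le).trans_lt
      (hv_mono self_mem_Ici (mem_Ici.2 zero_le_one) zero_lt_one)
  refine ⟨I 1 * exp (-v 1), by positivity [hpos 1 zero_le_one], v 1, hv1, fun t ht => ?_⟩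
  calc I 1 * exp (-v 1) * exp (v 1 * t) = exp (log (I 1) + v 1 * (t - 1)) := by
        rw [exp_add, exp_log (hpos 1 zero_le_one), mul_assoc, ← exp_add]
        ring_nf
    _ ≤ exp (log (I t)) := exp_le_exp.2 <|
        hconv.add_mul_sub_le_of_hasDerivAt (mem_Ici.2 zero_le_one) ht (hlogI 1 zero_le_one)
    _ = I t := exp_log (hpos t ht)

end SecondOrder

section Evolution

variable {H : Type*} [NormedAddCommGroup H] [InnerProductSpace ℝ H] {A : H →L[ℝ] H}
  {Q Q' : ℝ → H}

theorem hasDerivAt_two_mul_inner_deriv (hQ : ∀ t, HasDerivAt Q (Q' t) t)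
    (hQ' : ∀ t, HasDerivAt Q' (-A (Q t)) t) (t : ℝ) :
    HasDerivAt (fun t => 2 * ⟪Q t, Q' t⟫) (2 * (‖Q' t‖ ^ 2 - ⟪Q t, A (Q t)⟫)) t := by
  refine (((hQ t).inner ℝ (hQ' t)).const_mul 2).congr_deriv ?_
  rw [inner_neg_right, real_inner_self_eq_norm_sq]
  ring

theorem norm_deriv_sq_add_inner_apply_eq (hA : (A : H →ₗ[ℝ] H).IsSymmetric)
    (hQ : ∀ t, HasDerivAt Q (Q' t) t) (hQ' : ∀ t, HasDerivAt Q' (-A (Q t)) t) (t : ℝ) :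
    ‖Q' t‖ ^ 2 + ⟪Q t, A (Q t)⟫ = ‖Q' 0‖ ^ 2 + ⟪Q 0, A (Q 0)⟫ := by
  have hE : ∀ t, HasDerivAt (fun t => ‖Q' t‖ ^ 2 + ⟪Q t, A (Q t)⟫) 0 t := fun t => by
    refine ((hQ' t).norm_sq.add
      ((hQ t).inner ℝ (A.hasFDerivAt.comp_hasDerivAt t (hQ t)))).congr_deriv ?_
    rw [Function.comp_apply, inner_neg_right, ← hA.apply_clm (Q t), real_inner_comm (Q' t)]
    ring
  exact is_const_of_deriv_eq_zero (fun t => (hE t).differentiableAt) (fun t => (hE t).deriv) t 0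

theorem sq_two_mul_inner_lt_mul_norm_sq {x v : H} {c : ℝ} (hc : ‖v‖ ^ 2 + c < 0) (hx : x ≠ 0) :
    (2 * ⟪x, v⟫) ^ 2 < 2 * (‖v‖ ^ 2 - c) * ‖x‖ ^ 2 := by
  have hcs : |⟪x, v⟫| ≤ ‖x‖ * ‖v‖ := abs_real_inner_le_norm x v
  have hx' : 0 < ‖x‖ ^ 2 := by positivity
  nlinarith [sq_abs ⟪x, v⟫, abs_nonneg ⟪x, v⟫]

end Evolution

theorem stmt_3_general {H : Type*} [NormedAddCommGroup H] [InnerProductSpace ℝ H]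
    (A : H →L[ℝ] H)
    (hA : ∀ x y : H, ⟪A x, y⟫ = ⟪x, A y⟫)
    (Q₀ : H) (hneg : ⟪Q₀, A Q₀⟫ < 0) (Q : ℝ → H)
    (hQ : Differentiable ℝ Q) (hQ' : Differentiable ℝ (deriv Q))
    (hEq : ∀ t : ℝ, deriv (deriv Q) t = -A (Q t))
    (hQ0 : Q 0 = Q₀) (h0 : deriv Q 0 = 0) :
    ∃ C > (0 : ℝ), ∃ α > (0 : ℝ), ∀ t : ℝ, 0 ≤ t →
      C * Real.exp (α * t) ≤ ‖Q t‖ := by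
  have hQd (t : ℝ) : HasDerivAt Q (deriv Q t) t := (hQ t).hasDerivAt
  have hQd' (t : ℝ) : HasDerivAt (deriv Q) (-A (Q t)) t := hEq t ▸ (hQ' t).hasDerivAt
  have hI' := hasDerivAt_two_mul_inner_deriv hQd hQd'
  have henergy (t : ℝ) : ‖deriv Q t‖ ^ 2 + ⟪Q t, A (Q t)⟫ = ⟪Q₀, A Q₀⟫ := by
    simpa [hQ0, h0] using norm_deriv_sq_add_inner_apply_eq hA hQd hQd' t
  have hI'' (t : ℝ) : 0 ≤ 2 * (‖deriv Q t‖ ^ 2 - ⟪Q t, A (Q t)⟫) := by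
    nlinarith [henergy t, sq_nonneg ‖deriv Q t‖]
  have hI'0 : 0 ≤ 2 * ⟪Q 0, deriv Q 0⟫ := by simp [h0]
  have hQ₀ : Q₀ ≠ 0 := by rintro rfl; simp at hneg
  have hpos (t : ℝ) (ht : 0 ≤ t) : 0 < ‖Q t‖ ^ 2 :=
    (pow_pos (norm_pos_iff.2 (hQ0 ▸ hQ₀)) 2).trans_le
      (le_of_deriv_nonneg_of_deriv2_nonneg (fun t => (hQd t).norm_sq) hI' hI'' hI'0 ht)
  obtain ⟨C, hC, α, hα, hgrowth⟩ := exists_mul_exp_le_of_sq_deriv_lt (fun t => (hQd t).norm_sq)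
    hI' hpos hI'0 fun t ht => sq_two_mul_inner_lt_mul_norm_sq (henergy t ▸ hneg)
      fun h => by simpa [h] using hpos t ht
  refine ⟨√C, sqrt_pos.2 hC, α / 2, half_pos hα, fun t ht => ?_⟩
  have := sqrt_le_sqrt (hgrowth t ht)
  rwa [sqrt_mul hC.le, sqrt_sq (norm_nonneg _), ← exp_half, mul_div_right_comm] at this

/-- If the initial data `Q₀` has negative potential energy `⟪Q₀, A Q₀⟫ < 0`,
then the solution of `Q'' = -A Q` with `Q 0 = Q₀`, `Q' 0 = 0` grows
exponentially: `‖Q t‖ ≥ C exp (α t)` for all `t ≥ 0`, for some `C, α > 0`. -/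
theorem stmt_3 {H : Type*} [NormedAddCommGroup H] [InnerProductSpace ℝ H]
    [CompleteSpace H] (A : H →L[ℝ] H)
    (hA : ∀ x y : H, ⟪A x, y⟫ = ⟪x, A y⟫)
    (Q₀ : H) (hneg : ⟪Q₀, A Q₀⟫ < 0) (Q : ℝ → H)
    (hQ : Differentiable ℝ Q) (hQ' : Differentiable ℝ (deriv Q))
    (hEq : ∀ t : ℝ, deriv (deriv Q) t = -A (Q t))
    (hQ0 : Q 0 = Q₀) (h0 : deriv Q 0 = 0) :
    ∃ C > (0 : ℝ), ∃ α > (0 : ℝ), ∀ t : ℝ, 0 ≤ t →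
      C * Real.exp (α * t) ≤ ‖Q t‖ :=
  stmt_3_general A hA Q₀ hneg Q hQ hQ' hEq hQ0 h0
end

section
/- Let H be a real Hilbert space, A : H →L[ℝ] H a bounded self-adjoint operator, and let α > 0 and Q₀ ∈ H satisfy ⟪Q₀, A Q₀⟫ < −α² ‖Q₀‖². If Q : ℝ → H is a solution of the linearized evolution equation Q''(t) = −A (Q(t)) with Q(0) = Q₀ and Q'(0) = 0, then exp(−2 α t) · ‖Q(t)‖² tends to infinity as t → ∞. -/
/-!
Put `y = ‖Q‖²`. Conservation of `‖Q'‖² + ⟪Q, A Q⟫` gives `y'' = 4‖Q'‖² + 2μ` with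
`μ = -⟪Q₀, A Q₀⟫`, and Cauchy–Schwarz gives `(y')² ≤ 4 y ‖Q'‖² = y (y'' - 2μ)`.
For such a `y` the quantity `(y'/y)² + 4μ/y` is nondecreasing on `t ≥ 0`, so it stays above
its initial value `4μ/y(0) = 4ω²`, where `ω² > α²` by hypothesis. Since `y ≥ y(0) + μt² → ∞`,
the term `4μ/y` dies out and eventually `y'/y ≥ 2β` for any `β < ω`; hence `y` grows at least
like `exp(2βt)`, and choosing `α < β < ω` gives the claim.
-/

open scoped RealInnerProductSpace
open Filter Set Real

lemma monotoneOn_Ici_of_hasDerivAt_nonneg {f f' : ℝ → ℝ} {a : ℝ}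
    (hf : ∀ x, a ≤ x → HasDerivAt f (f' x) x) (hf' : ∀ x, a < x → 0 ≤ f' x) :
    MonotoneOn f (Ici a) :=
  monotoneOn_of_hasDerivWithinAt_nonneg (convex_Ici a)
    (fun x hx => (hf x hx).continuousAt.continuousWithinAt)
    (fun x hx => (hf x (by rw [interior_Ici] at hx; exact hx.le)).hasDerivWithinAt)
    (fun x hx => hf' x (by rwa [interior_Ici] at hx))

section DifferentialInequality

variable {y p q : ℝ → ℝ} {μ : ℝ}

lemma two_mul_mul_le_of_deriv_ge (hp : ∀ t, HasDerivAt p (q t) t) (hq : ∀ t, 2 * μ ≤ q t)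
    (hp0 : p 0 = 0) {t : ℝ} (ht : 0 ≤ t) : 2 * μ * t ≤ p t := by
  have hmono : Monotone fun s => p s - 2 * μ * s :=
    monotone_of_hasDerivAt_nonneg (fun s => (hp s).sub ((hasDerivAt_id s).const_mul (2 * μ)))
      (fun s => by simpa using hq s)
  have : p 0 - 2 * μ * 0 ≤ p t - 2 * μ * t := hmono ht
  linarith

lemma add_mul_sq_le_of_second_deriv_ge (hy : ∀ t, HasDerivAt y (p t) t)
    (hp : ∀ t, HasDerivAt p (q t) t) (hq : ∀ t, 2 * μ ≤ q t) (hp0 : p 0 = 0)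
    {t : ℝ} (ht : 0 ≤ t) : y 0 + μ * t ^ 2 ≤ y t := by
  have hmono : MonotoneOn (fun s => y s - μ * s ^ 2) (Ici 0) := by
    refine monotoneOn_Ici_of_hasDerivAt_nonneg
      (fun s _ => (hy s).sub ((hasDerivAt_pow 2 s).const_mul μ)) fun s hs => ?_
    rw [Nat.cast_ofNat, show 2 - 1 = 1 from rfl, pow_one]
    linarith [two_mul_mul_le_of_deriv_ge hp hq hp0 hs.le]
  have : y 0 - μ * 0 ^ 2 ≤ y t - μ * t ^ 2 := hmono self_mem_Ici ht ht
  linarith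

lemma monotoneOn_sq_div_add_div_of_ode_ineq (hy : ∀ t, HasDerivAt y (p t) t)
    (hp : ∀ t, HasDerivAt p (q t) t) (hq : ∀ t, 2 * μ ≤ q t)
    (hcs : ∀ t, p t ^ 2 ≤ y t * (q t - 2 * μ)) (hp0 : p 0 = 0) (hy0 : 0 < y 0) (hμ : 0 ≤ μ) :
    MonotoneOn (fun t => (p t / y t) ^ 2 + 4 * μ / y t) (Ici 0) := by
  have hpos : ∀ t, 0 ≤ t → 0 < y t ∧ 0 ≤ p t := fun t ht => by
    have := add_mul_sq_le_of_second_deriv_ge hy hp hq hp0 ht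
    have := two_mul_mul_le_of_deriv_ge hp hq hp0 ht
    constructor <;> nlinarith
  refine monotoneOn_Ici_of_hasDerivAt_nonneg (f' := fun t =>
    2 * p t * (y t * (q t - 2 * μ) - p t ^ 2) / y t ^ 3) (fun t ht => ?_) (fun t ht => ?_)
  · have hyt := (hpos t ht).1.ne'
    refine ((((hp t).div (hy t) hyt).pow 2).add
      ((hasDerivAt_const t (4 * μ)).div (hy t) hyt)).congr_deriv ?_
    rw [Pi.div_apply, Nat.cast_ofNat, show 2 - 1 = 1 from rfl, pow_one]
    field_simp
    ring
  · obtain ⟨hyt, hpt⟩ := hpos t ht.le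
    have := sub_nonneg.2 (hcs t)
    positivity

lemma tendsto_exp_mul_atTop_of_eventually_le_deriv {α β : ℝ} (hy : ∀ t, HasDerivAt y (p t) t)
    (hαβ : α < β) (hgrowth : ∀ᶠ t in atTop, 0 < y t ∧ 2 * β * y t ≤ p t) :
    Tendsto (fun t => exp (-2 * α * t) * y t) atTop atTop := by
  obtain ⟨T, hT⟩ := eventually_atTop.1 hgrowth
  have hmono : MonotoneOn (fun t => exp (-2 * β * t) * y t) (Ici T) := by
    refine monotoneOn_Ici_of_hasDerivAt_nonneg
      (f' := fun t => exp (-2 * β * t) * (p t - 2 * β * y t)) (fun t _ => ?_)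
      fun t ht => mul_nonneg (exp_pos _).le (sub_nonneg.2 (hT t ht.le).2)
    refine (((hasDerivAt_id t).const_mul (-2 * β)).exp.mul (hy t)).congr_deriv ?_
    simp only [id, mul_one]
    ring
  have hT_pos : 0 < exp (-2 * β * T) * y T := mul_pos (exp_pos _) (hT T le_rfl).1
  have hexp : Tendsto (fun t => exp (2 * (β - α) * t)) atTop atTop :=
    tendsto_exp_atTop.comp (tendsto_id.const_mul_atTop (by linarith))
  refine tendsto_atTop_mono' _ ?_ (hexp.atTop_mul_const hT_pos)
  filter_upwards [eventually_ge_atTop T] with t ht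
  calc exp (2 * (β - α) * t) * (exp (-2 * β * T) * y T)
      ≤ exp (2 * (β - α) * t) * (exp (-2 * β * t) * y t) :=
        mul_le_mul_of_nonneg_left (hmono self_mem_Ici ht ht) (exp_pos _).le
    _ = exp (-2 * α * t) * y t := by rw [← mul_assoc, ← exp_add]; ring_nf

theorem tendsto_exp_mul_atTop_of_ode_ineq {α : ℝ} (hy : ∀ t, HasDerivAt y (p t) t)
    (hp : ∀ t, HasDerivAt p (q t) t) (hq : ∀ t, 2 * μ ≤ q t)
    (hcs : ∀ t, p t ^ 2 ≤ y t * (q t - 2 * μ)) (hp0 : p 0 = 0) (hy0 : 0 < y 0)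
    (hμ : α ^ 2 * y 0 < μ) :
    Tendsto (fun t => exp (-2 * α * t) * y t) atTop atTop := by
  have hμ0 : 0 < μ := lt_of_le_of_lt (by positivity) hμ
  have hω : α ^ 2 < μ / y 0 := (lt_div_iff₀ hy0).2 hμ
  obtain ⟨β, hαβ, hβω⟩ := exists_between (Real.lt_sqrt_of_sq_lt hω)
  have hβ : β ^ 2 < μ / y 0 := by
    have hαω : -α < √(μ / y 0) := Real.lt_sqrt_of_sq_lt (by rwa [neg_sq])
    calc β ^ 2 < √(μ / y 0) ^ 2 := sq_lt_sq' (by linarith) hβω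
      _ = μ / y 0 := sq_sqrt (by positivity)
  have hy_lb := fun t (ht : 0 ≤ t) => add_mul_sq_le_of_second_deriv_ge hy hp hq hp0 ht
  have hy_atTop : Tendsto y atTop atTop := by
    refine tendsto_atTop_mono' _ ?_ (tendsto_atTop_add_const_left _ (y 0)
      ((tendsto_pow_atTop two_ne_zero).const_mul_atTop hμ0))
    filter_upwards [eventually_ge_atTop 0] with t ht using hy_lb t ht
  have hsmall : ∀ᶠ t in atTop, 4 * μ / y t < 4 * μ / y 0 - 4 * β ^ 2 :=
    (tendsto_const_nhds.div_atTop hy_atTop).eventually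
      (gt_mem_nhds (by rw [mul_div_assoc]; linarith))
  refine tendsto_exp_mul_atTop_of_eventually_le_deriv hy hαβ ?_
  filter_upwards [hsmall, eventually_ge_atTop 0] with t hsmall_t ht
  have hyt : 0 < y t := by nlinarith [hy_lb t ht]
  have hpt : 0 ≤ p t := by nlinarith [two_mul_mul_le_of_deriv_ge hp hq hp0 ht]
  have hr : (p 0 / y 0) ^ 2 + 4 * μ / y 0 ≤ (p t / y t) ^ 2 + 4 * μ / y t :=
    monotoneOn_sq_div_add_div_of_ode_ineq hy hp hq hcs hp0 hy0 hμ0.le self_mem_Ici ht ht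
  rw [hp0, zero_div, zero_pow two_ne_zero, zero_add] at hr
  have hsq : (2 * β) ^ 2 ≤ (p t / y t) ^ 2 := by linarith
  have := (le_abs_self _).trans (abs_le_of_sq_le_sq hsq (div_nonneg hpt hyt.le))
  exact ⟨hyt, (le_div_iff₀ hyt).1 this⟩

end DifferentialInequality

theorem norm_sq_add_inner_apply_eq {H : Type*} [NormedAddCommGroup H] [InnerProductSpace ℝ H]
    {A : H →L[ℝ] H} {Q V : ℝ → H} (hA : ∀ x y : H, ⟪A x, y⟫ = ⟪x, A y⟫)
    (hQ : ∀ t, HasDerivAt Q (V t) t) (hV : ∀ t, HasDerivAt V (-A (Q t)) t) (t : ℝ) :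
    ‖V t‖ ^ 2 + ⟪Q t, A (Q t)⟫ = ‖V 0‖ ^ 2 + ⟪Q 0, A (Q 0)⟫ := by
  have hE : ∀ s, HasDerivAt (fun s => ‖V s‖ ^ 2 + ⟪Q s, A (Q s)⟫) 0 s := fun s => by
    refine ((hV s).norm_sq.add
      ((hQ s).inner ℝ (A.hasFDerivAt.comp_hasDerivAt s (hQ s)))).congr_deriv ?_
    rw [inner_neg_right, Function.comp_apply, ← hA (V s), real_inner_comm (A (V s))]
    ring
  exact is_const_of_deriv_eq_zero (fun s => (hE s).differentiableAt) (fun s => (hE s).deriv) t 0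

theorem stmt_4_general {H : Type*} [NormedAddCommGroup H] [InnerProductSpace ℝ H]
    (A : H →L[ℝ] H)
    (hA : ∀ x y : H, ⟪A x, y⟫ = ⟪x, A y⟫)
    (α : ℝ) (Q₀ : H)
    (hneg : ⟪Q₀, A Q₀⟫ < -α ^ 2 * ‖Q₀‖ ^ 2) (Q : ℝ → H)
    (hQ : Differentiable ℝ Q) (hQ' : Differentiable ℝ (deriv Q))
    (hEq : ∀ t : ℝ, deriv (deriv Q) t = -A (Q t))
    (hQ0 : Q 0 = Q₀) (h0 : deriv Q 0 = 0) :
    Filter.Tendsto (fun t : ℝ => Real.exp (-2 * α * t) * ‖Q t‖ ^ 2)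
      Filter.atTop Filter.atTop := by
  have hQd : ∀ t, HasDerivAt Q (deriv Q t) t := fun t => (hQ t).hasDerivAt
  have hQ'd : ∀ t, HasDerivAt (deriv Q) (-A (Q t)) t := fun t => hEq t ▸ (hQ' t).hasDerivAt
  have henergy := norm_sq_add_inner_apply_eq hA hQd hQ'd
  rw [h0, hQ0, norm_zero] at henergy
  have hQ₀ : Q₀ ≠ 0 := by
    rintro rfl
    simp at hneg
  refine tendsto_exp_mul_atTop_of_ode_ineq (μ := -⟪Q₀, A Q₀⟫) (fun t => (hQd t).norm_sq)
    (fun t => ((hQd t).inner ℝ (hQ'd t)).const_mul 2) (fun t => ?_) (fun t => ?_)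
    (by simp [h0]) (by rw [hQ0]; exact pow_pos (norm_pos_iff.2 hQ₀) 2) (by rw [hQ0]; linarith)
  · rw [inner_neg_right, real_inner_self_eq_norm_sq]
    linarith [henergy t, sq_nonneg ‖deriv Q t‖]
  · rw [inner_neg_right, real_inner_self_eq_norm_sq]
    have hcs : ⟪Q t, deriv Q t⟫ ^ 2 ≤ (‖Q t‖ * ‖deriv Q t‖) ^ 2 :=
      sq_le_sq.2 ((abs_real_inner_le_norm _ _).trans (le_abs_self _))
    nlinarith [henergy t, hcs]

/-- Variational principle for instability: if `⟪Q₀, A Q₀⟫ < -α² ‖Q₀‖²` with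
`α > 0`, then the solution of `Q'' = -A Q` with `Q 0 = Q₀`, `Q' 0 = 0`
satisfies `exp(-2αt) ‖Q t‖² → ∞` as `t → ∞`. -/
theorem stmt_4 {H : Type*} [NormedAddCommGroup H] [InnerProductSpace ℝ H]
    [CompleteSpace H] (A : H →L[ℝ] H)
    (hA : ∀ x y : H, ⟪A x, y⟫ = ⟪x, A y⟫)
    (α : ℝ) (hα : 0 < α) (Q₀ : H)
    (hneg : ⟪Q₀, A Q₀⟫ < -α ^ 2 * ‖Q₀‖ ^ 2) (Q : ℝ → H)
    (hQ : Differentiable ℝ Q) (hQ' : Differentiable ℝ (deriv Q))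
    (hEq : ∀ t : ℝ, deriv (deriv Q) t = -A (Q t))
    (hQ0 : Q 0 = Q₀) (h0 : deriv Q 0 = 0) :
    Filter.Tendsto (fun t : ℝ => Real.exp (-2 * α * t) * ‖Q t‖ ^ 2)
      Filter.atTop Filter.atTop :=
  stmt_4_general A hA α Q₀ hneg Q hQ hQ' hEq hQ0 h0
end

section
/- Let V be a finite-dimensional real inner product space, φ ∈ V a nonzero vector, and let R : V →ₗ[ℝ] V be the reflection R x = x − (2 ⟪x, φ⟫ / ⟪φ, φ⟫) φ (so R φ = −φ and R fixes the orthogonal complement of φ). Let S : V × V → ℝ be a symmetric bilinear form satisfying S(R x, R y) = −S(x, y) for all x, y ∈ V. Then there exists a unique vector λ ∈ V with ⟪λ, φ⟫ = 0 such that S(x, y) = ⟪λ, x⟫ ⟪φ, y⟫ + ⟪φ, x⟫ ⟪λ, y⟫ for all x, y ∈ V. -/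
/-!
Write the reflection as `R x = x - f x • φ` with `f φ = 2`. Expanding `S (R x) (R y) = -S x y`
at `x = y = φ` gives `S φ φ = 0`, and then in general `S x y = ½ (f x S φ y + f y S φ x)`.
So `S` is the symmetrised product of `⟪φ, ·⟫` with `S φ / ⟪φ, φ⟫`, and `λ` is the Riesz
representative of the latter; it is orthogonal to `φ` because `S φ φ = 0`, and it is unique
because pairing the decomposition with `φ` recovers `⟪λ, ·⟫ = S φ / ⟪φ, φ⟫`.
-/

open scoped RealInnerProductSpace

namespace LinearMap.BilinForm

open Module

variable {R M : Type*} [CommRing R] [AddCommGroup M] [Module R M]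

theorem apply_preReflection_preReflection (B : LinearMap.BilinForm R M) (x : M)
    (f : Dual R M) (y z : M) :
    B (preReflection x f y) (preReflection x f z) =
      B y z - f z * B y x - f y * B x z + f y * f z * B x x := by
  simp only [preReflection_apply, map_sub, map_smul, LinearMap.sub_apply,
    LinearMap.smul_apply, smul_eq_mul]
  ring

variable [Invertible (2 : R)] {B : LinearMap.BilinForm R M} {x : M} {f : Dual R M}

theorem apply_self_eq_zero_of_preReflection (hf : f x = 2)
    (hodd : ∀ y z, B (preReflection x f y) (preReflection x f z) = -B y z) :
    B x x = 0 := by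
  have h := hodd x x
  rw [apply_preReflection_preReflection, hf] at h
  have h2 : (2 : R) * B x x = 0 := by linear_combination h
  linear_combination ⅟2 * h2 - B x x * invOf_mul_self (2 : R)

theorem apply_eq_of_preReflection (hB : ∀ y z, B y z = B z y) (hf : f x = 2)
    (hodd : ∀ y z, B (preReflection x f y) (preReflection x f z) = -B y z) (y z : M) :
    B y z = ⅟2 * f y * B x z + ⅟2 * f z * B x y := by
  have h := hodd y z
  rw [apply_preReflection_preReflection, apply_self_eq_zero_of_preReflection hf hodd,
    hB y x] at h
  have h2 : (2 : R) * B y z = f y * B x z + f z * B x y := by linear_combination h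
  linear_combination ⅟2 * h2 - B y z * invOf_mul_self (2 : R)

end LinearMap.BilinForm

section InnerProductSpace

variable {V : Type*} [NormedAddCommGroup V] [InnerProductSpace ℝ V]

theorem preReflection_inner_apply (φ y : V) :
    Module.preReflection φ ((2 / ⟪φ, φ⟫) • innerₛₗ ℝ φ) y = y - (2 * ⟪y, φ⟫ / ⟪φ, φ⟫) • φ := by
  rw [Module.preReflection_apply, LinearMap.smul_apply, innerₛₗ_apply_apply,
    real_inner_comm y φ, smul_eq_mul, div_mul_eq_mul_div]

theorem exists_inner_eq [FiniteDimensional ℝ V] (f : V →ₗ[ℝ] ℝ) :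
    ∃ v : V, ∀ x, ⟪v, x⟫ = f x :=
  ⟨(InnerProductSpace.toDual ℝ V).symm (LinearMap.toContinuousLinearMap f), fun x => by
    simp [InnerProductSpace.toDual_symm_apply]⟩

end InnerProductSpace

/-- Pointwise form of the paper's claim that a symmetric tensor odd under the
reflection `R` negating `φ` and fixing `φ^⊥` has the form
`S(x,y) = ⟪λ,x⟫⟪φ,y⟫ + ⟪φ,x⟫⟪λ,y⟫` with `λ ⊥ φ`, uniquely. -/
theorem stmt_10 {V : Type*} [NormedAddCommGroup V] [InnerProductSpace ℝ V]
    [FiniteDimensional ℝ V] (φ : V) (hφ : φ ≠ 0)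
    (S : V →ₗ[ℝ] V →ₗ[ℝ] ℝ) (hSsymm : ∀ x y : V, S x y = S y x)
    (hodd : ∀ x y : V,
      S (x - (2 * ⟪x, φ⟫ / ⟪φ, φ⟫) • φ) (y - (2 * ⟪y, φ⟫ / ⟪φ, φ⟫) • φ)
        = -S x y) :
    ∃! lam : V, ⟪lam, φ⟫ = 0 ∧
      ∀ x y : V, S x y = ⟪lam, x⟫ * ⟪φ, y⟫ + ⟪φ, x⟫ * ⟪lam, y⟫ := by
  have hφφ : ⟪φ, φ⟫ ≠ 0 := inner_self_ne_zero.2 hφ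
  set f : Module.Dual ℝ V := (2 / ⟪φ, φ⟫) • innerₛₗ ℝ φ
  have hf : f φ = 2 := div_mul_cancel₀ 2 hφφ
  have hodd' : ∀ y z, S (Module.preReflection φ f y) (Module.preReflection φ f z) = -S y z := by
    simpa only [f, preReflection_inner_apply] using hodd
  have determined (lam : V) (h0 : ⟪lam, φ⟫ = 0)
      (h : ∀ x y, S x y = ⟪lam, x⟫ * ⟪φ, y⟫ + ⟪φ, x⟫ * ⟪lam, y⟫) (y : V) :
      ⟪lam, y⟫ = S φ y / ⟪φ, φ⟫ := by
    rw [h, h0, zero_mul, zero_add, mul_div_cancel_left₀ _ hφφ]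
  obtain ⟨lam, hlam⟩ := exists_inner_eq ((⟪φ, φ⟫)⁻¹ • S φ)
  have hlam0 : ⟪lam, φ⟫ = 0 := by
    simp [hlam, LinearMap.BilinForm.apply_self_eq_zero_of_preReflection hf hodd']
  have hdecomp (x y : V) : S x y = ⟪lam, x⟫ * ⟪φ, y⟫ + ⟪φ, x⟫ * ⟪lam, y⟫ := by
    rw [LinearMap.BilinForm.apply_eq_of_preReflection hSsymm hf hodd', hlam, hlam]
    simp only [f, LinearMap.smul_apply, innerₛₗ_apply_apply, smul_eq_mul, invOf_eq_inv]
    field_simp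
    ring
  refine ⟨lam, ⟨hlam0, hdecomp⟩, fun lam' ⟨h0, h⟩ => ext_inner_right ℝ fun y => ?_⟩
  rw [determined lam' h0 h, determined lam hlam0 hdecomp]
end
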